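/- Let p, p′, r, r′ : ℤ → [0,1] and θ, θ′, κ, κ′ : ℤ → [0,2π) be such that both parameter families are normalized in the following sense (stated for (p,r,θ,κ); the same conditions are required of (p′,r′,θ′,κ′)): (a) p_x < 1 for all x ∈ ℤ (so q_x = √(1−p_x²) ≠ 0); (b) θ_x = 0 whenever p_x = 0, and κ_x = 0 whenever r_x = 0; (c) if {x ≥ 0 : r_x ≠ 0} is nonempty then κ_w = 0 for w = min{x ≥ 0 : r_x ≠ 0}; otherwise, if {x ≤ −1 : r_x ≠ 0} is nonempty then κ_w = 0 for w = max{x ≤ −1 : r_x ≠ 0}; otherwise (r ≡ 0), if {x ≥ 0 : p_x ≠ 0} is nonempty then θ_w = 0 for w = min{x ≥ 0 : p_x ≠ 0}; otherwise, if {x ≤ −1 : p_x ≠ 0} is nonempty then θ_w = 0 for w = max{x ≤ −1 : p_x ≠ 0}. Then U_{p,r,θ,κ} and U_{p′,r′,θ′,κ′} are unitarily equivalent if and only if p = p′, r = r′, θ = θ′ and κ = κ′. -/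

import Mathlib

noncomputable section

/-- `H = ⊕_{x∈ℤ} H_x`, the ℓ² direct sum with each `H_x` a copy of `ℂ²`. -/
abbrev H : Type := lp (fun _ : ℤ × Fin 2 => ℂ) 2

/-- The canonical orthonormal basis vector `eᵢˣ` of `H_x` viewed in `H`. -/
def e (x : ℤ) (i : Fin 2) : H := lp.single 2 (x, i) 1

/-- The subspace `H_x` of `H`. -/
def Hx (x : ℤ) : Submodule ℂ H := Submodule.span ℂ {e x 0, e x 1}

/-- The rank-one operator `|u⟩⟨v| : w ↦ ⟨v, w⟩ u`. -/
def ketbra (u v : H) : H →L[ℂ] H := ((innerSL ℂ) v).smulRight u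

/-- The orthogonal projection of `H` onto `H_x`. -/
def P (x : ℤ) : H →L[ℂ] H := ketbra (e x 0) (e x 0) + ketbra (e x 1) (e x 1)

/-- A unitary (linear isometric equivalence) viewed as a continuous linear map. -/
def clm (U : H ≃ₗᵢ[ℂ] H) : H →L[ℂ] H := U.toLinearIsometry.toContinuousLinearMap

/-- `{u, v}` is an orthonormal basis of the two dimensional space `H_x`. -/
def ONBx (x : ℤ) (u v : H) : Prop :=
  u ∈ Hx x ∧ v ∈ Hx x ∧ ‖u‖ = 1 ∧ ‖v‖ = 1 ∧ (inner ℂ u v : ℂ) = 0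

/-- The SSQW conditions: `U H_x ⊆ H_{x-1} ⊕ H_x ⊕ H_{x+1}` and
`rank(P_{x±1} U P_x) ≤ 1` for all `x`. -/
def SSQW (U : H ≃ₗᵢ[ℂ] H) : Prop :=
  (∀ x : ℤ, ∀ ψ ∈ Hx x, U ψ ∈ Hx (x - 1) ⊔ Hx x ⊔ Hx (x + 1)) ∧
  (∀ x : ℤ, LinearMap.rank (((P (x + 1)).comp ((clm U).comp (P x))).toLinearMap) ≤ 1) ∧
  (∀ x : ℤ, LinearMap.rank (((P (x - 1)).comp ((clm U).comp (P x))).toLinearMap) ≤ 1)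

/-- Unitary equivalence of quantum walks: conjugation by a unitary `W`
preserving every `H_x`. -/
def UnitEquiv (U U' : H ≃ₗᵢ[ℂ] H) : Prop :=
  ∃ W : H ≃ₗᵢ[ℂ] H,
    (∀ x : ℤ, (Hx x).map (W.toLinearEquiv : H →ₗ[ℂ] H) = Hx x) ∧
    U' = (W.symm.trans U).trans W

/-- `V` is the quantum walk `U_{p,r,θ,κ}`: with `q_x = √(1-p_x²)` and
`s_x = √(1-r_x²)`, it sends `e^{iκ_x} r_x e₁ˣ + s_x e₂ˣ` to
`e^{iθ_x} p_x e₁ˣ + q_x e₂^{x+1}`, and `s_x e₁ˣ − e^{−iκ_x} r_x e₂ˣ` to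
`q_{x−1} e₁^{x−1} − e^{−iθ_{x−1}} p_{x−1} e₂ˣ`, for every `x ∈ ℤ`. -/
def IsUprtk (p r θ κ : ℤ → ℝ) (V : H ≃ₗᵢ[ℂ] H) : Prop :=
  ∀ x : ℤ,
    V ((Complex.exp (Complex.I * (κ x : ℂ)) * (r x : ℂ)) • e x 0
        + (Real.sqrt (1 - (r x) ^ 2) : ℂ) • e x 1)
      = (Complex.exp (Complex.I * (θ x : ℂ)) * (p x : ℂ)) • e x 0
        + (Real.sqrt (1 - (p x) ^ 2) : ℂ) • e (x + 1) 1 ∧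
    V ((Real.sqrt (1 - (r x) ^ 2) : ℂ) • e x 0
        - (Complex.exp (-(Complex.I * (κ x : ℂ))) * (r x : ℂ)) • e x 1)
      = (Real.sqrt (1 - (p (x - 1)) ^ 2) : ℂ) • e (x - 1) 0
        - (Complex.exp (-(Complex.I * (θ (x - 1) : ℂ))) * (p (x - 1) : ℂ)) • e x 1

/-- The normalization of the parameters `(p, r, θ, κ)` in Case (1):
(a) `p_x < 1` for all `x` (so `q_x ≠ 0`); (b) `θ_x = 0` when `p_x = 0` and
`κ_x = 0` when `r_x = 0`; (c) the gauge fixing: `κ_w = 0` at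
`w = min{x ≥ 0 : r_x ≠ 0}` if that set is nonempty; otherwise `κ_w = 0` at
`w = max{x ≤ −1 : r_x ≠ 0}` if nonempty; otherwise (`r ≡ 0`) `θ_w = 0` at
`w = min{x ≥ 0 : p_x ≠ 0}` if nonempty; otherwise `θ_w = 0` at
`w = max{x ≤ −1 : p_x ≠ 0}` if nonempty. -/
def NormalizedCaseOne (p r θ κ : ℤ → ℝ) : Prop :=
  (∀ x : ℤ, p x < 1) ∧
  (∀ x : ℤ, p x = 0 → θ x = 0) ∧
  (∀ x : ℤ, r x = 0 → κ x = 0) ∧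
  (∀ w : ℤ, IsLeast {x : ℤ | 0 ≤ x ∧ r x ≠ 0} w → κ w = 0) ∧
  ((∀ x : ℤ, 0 ≤ x → r x = 0) →
    ∀ w : ℤ, IsGreatest {x : ℤ | x ≤ -1 ∧ r x ≠ 0} w → κ w = 0) ∧
  ((∀ x : ℤ, r x = 0) →
    (∀ w : ℤ, IsLeast {x : ℤ | 0 ≤ x ∧ p x ≠ 0} w → θ w = 0) ∧
    ((∀ x : ℤ, 0 ≤ x → p x = 0) →
      ∀ w : ℤ, IsGreatest {x : ℤ | x ≤ -1 ∧ p x ≠ 0} w → θ w = 0))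


/-!
A unitary `W` that preserves every `H_x` and intertwines the two walks is diagonal in the basis
`eᵢˣ`: the hopping parts of a walk from `H_x` to `H_{x+1}` and `H_{x-1}` have ranges `ℂ e₂^{x+1}`
and `ℂ e₁^{x-1}`, and `W` must preserve these lines. Conjugating by a diagonal unitary `diag d`
only rotates the phases of the matrix entries, so their moduli agree, whence `p = p'` and
`r = r'`. The remaining phase equations make `d (x + 1) 1 / d x 0` a constant `T` with
`e^{iκ_x} = T e^{iκ'_x}` wherever `r_x ≠ 0` and `e^{iθ_x} = T e^{iθ'_x}` wherever `p_x ≠ 0`, and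
the gauge fixing in the normalization forces `T = 1`.
-/

open Complex Set

@[simp] theorem H.add_apply (u v : H) (z : ℤ × Fin 2) : (u + v) z = u z + v z := rfl

@[simp] theorem H.sub_apply (u v : H) (z : ℤ × Fin 2) : (u - v) z = u z - v z := rfl

@[simp] theorem H.smul_apply (c : ℂ) (u : H) (z : ℤ × Fin 2) : (c • u) z = c * u z := rfl

theorem e_apply (x : ℤ) (i : Fin 2) (y : ℤ) (j : Fin 2) :
    e x i (y, j) = if x = y ∧ i = j then 1 else 0 := by
  simp [e, Pi.single_apply, eq_comm]

theorem norm_e (x : ℤ) (i : Fin 2) : ‖e x i‖ = 1 := by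
  simp [e, lp.norm_single]

theorem e_mem_Hx (x : ℤ) (i : Fin 2) : e x i ∈ Hx x := by
  fin_cases i
  exacts [Submodule.subset_span (mem_insert _ _), Submodule.subset_span (mem_insert_of_mem _ rfl)]

theorem eq_of_mem_Hx {x : ℤ} {v : H} (hv : v ∈ Hx x) :
    v = v (x, 0) • e x 0 + v (x, 1) • e x 1 := by
  obtain ⟨a, b, rfl⟩ := Submodule.mem_span_pair.1 hv
  simp [e_apply]

theorem apply_eq_zero_of_mem_Hx {x y : ℤ} {v : H} (hv : v ∈ Hx x) (hy : y ≠ x) (j : Fin 2) :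
    v (y, j) = 0 := by
  rw [eq_of_mem_Hx hv]
  simp [e_apply, hy.symm]

theorem ext_e {F : Type*} [NormedAddCommGroup F] [NormedSpace ℂ F] {f g : H →L[ℂ] F}
    (h : ∀ x i, f (e x i) = g (e x i)) : f = g := by
  ext ψ
  have hψ := lp.hasSum_single (E := fun _ : ℤ × Fin 2 => ℂ) ENNReal.ofNat_ne_top ψ
  have hsingle : ∀ z : ℤ × Fin 2, lp.single 2 z (ψ z) = ψ z • e z.1 z.2 := fun z => by
    rw [e, ← lp.single_smul, smul_eq_mul, mul_one]
  refine (f.hasSum hψ).unique ?_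
  simpa only [hsingle, map_smul, h] using g.hasSum hψ

section BlockDiagonal

variable {W : H ≃ₗᵢ[ℂ] H}
  (hW : ∀ x, (Hx x).map (W.toLinearEquiv : H →ₗ[ℂ] H) = Hx x)
include hW

theorem map_e_mem_Hx (x : ℤ) (i : Fin 2) : W (e x i) ∈ Hx x := by
  rw [← hW x]
  exact ⟨e x i, e_mem_Hx x i, rfl⟩

theorem map_apply_eq_sum (ψ : H) (y : ℤ) (j : Fin 2) :
    W ψ (y, j) = ∑ k, W (e y k) (y, j) * ψ (y, k) := by
  let f : H →L[ℂ] ℂ := (innerSL ℂ (e y j)).comp (clm W)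
  let g : H →L[ℂ] ℂ := ∑ k, W (e y k) (y, j) • innerSL ℂ (e y k)
  have inner_e_left : ∀ (k : Fin 2) (φ : H), innerSL ℂ (e y k) φ = φ (y, k) := fun k φ => by
    simp [e, lp.inner_single_left]
  have hfg : f = g := ext_e fun x i => by
    by_cases hxy : x = y
    · subst hxy
      fin_cases i <;> simp [f, g, clm, inner_e_left, e_apply]
    · simp [f, g, clm, inner_e_left, e_apply, hxy,
        apply_eq_zero_of_mem_Hx (map_e_mem_Hx hW x i) (Ne.symm hxy)]
  simpa [f, g, clm, inner_e_left] using congrArg (· ψ) hfg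

end BlockDiagonal

theorem exp_neg_I_mul_mul_exp_I_mul (t : ℝ) : cexp (-(I * t)) * cexp (I * t) = 1 := by
  rw [← Complex.exp_add, neg_add_cancel, Complex.exp_zero]

theorem sqrt_one_sub_sq_mul_self {ρ : ℝ} (hρ : ρ ∈ Icc (0 : ℝ) 1) :
    (√(1 - ρ ^ 2) : ℂ) * √(1 - ρ ^ 2) = 1 - ρ ^ 2 := by
  rw [← ofReal_mul, Real.mul_self_sqrt (by nlinarith [hρ.1, hρ.2])]
  push_cast; ring

section Walk

variable {p r θ κ : ℤ → ℝ} {V : H ≃ₗᵢ[ℂ] H}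

-- `e₁ˣ = ā u + s v` and `e₂ˣ = s u - a v`, where `u = a e₁ˣ + s e₂ˣ` and `v = s e₁ˣ - ā e₂ˣ`
-- are the two vectors whose images define the walk.
theorem IsUprtk.apply_e_zero (hV : IsUprtk p r θ κ V) {x : ℤ} (hr : r x ∈ Icc (0 : ℝ) 1) :
    V (e x 0) = (cexp (-(I * κ x)) * r x) •
        ((cexp (I * θ x) * p x) • e x 0 + (√(1 - p x ^ 2) : ℂ) • e (x + 1) 1)
      + (√(1 - r x ^ 2) : ℂ) •
        ((√(1 - p (x - 1) ^ 2) : ℂ) • e (x - 1) 0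
          - (cexp (-(I * θ (x - 1))) * p (x - 1)) • e x 1) := by
  rw [← (hV x).1, ← (hV x).2, ← map_smul, ← map_smul, ← map_add]
  congr 1
  linear_combination (norm := module)
    (-(exp_neg_I_mul_mul_exp_I_mul (κ x) * r x * r x) - sqrt_one_sub_sq_mul_self hr) • e x 0

theorem IsUprtk.apply_e_one (hV : IsUprtk p r θ κ V) {x : ℤ} (hr : r x ∈ Icc (0 : ℝ) 1) :
    V (e x 1) = (√(1 - r x ^ 2) : ℂ) •
        ((cexp (I * θ x) * p x) • e x 0 + (√(1 - p x ^ 2) : ℂ) • e (x + 1) 1)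
      - (cexp (I * κ x) * r x) •
        ((√(1 - p (x - 1) ^ 2) : ℂ) • e (x - 1) 0
          - (cexp (-(I * θ (x - 1))) * p (x - 1)) • e x 1) := by
  rw [← (hV x).1, ← (hV x).2, ← map_smul, ← map_smul, ← map_sub]
  congr 1
  linear_combination (norm := module)
    (-(exp_neg_I_mul_mul_exp_I_mul (κ x) * r x * r x) - sqrt_one_sub_sq_mul_self hr) • e x 1

variable (hV : IsUprtk p r θ κ V) {x : ℤ} (hr : r x ∈ Icc (0 : ℝ) 1)
include hV hr

theorem IsUprtk.apply_e_succ_zero (i : Fin 2) : V (e x i) (x + 1, 0) = 0 := by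
  fin_cases i <;>
    simp only [Fin.zero_eta, Fin.mk_one, hV.apply_e_zero hr, hV.apply_e_one hr, H.add_apply,
      H.sub_apply, H.smul_apply, e_apply] <;>
    simp [show x - 1 ≠ x + 1 by omega]

theorem IsUprtk.apply_e_pred_one (i : Fin 2) : V (e x i) (x - 1, 1) = 0 := by
  fin_cases i <;>
    simp only [Fin.zero_eta, Fin.mk_one, hV.apply_e_zero hr, hV.apply_e_one hr, H.add_apply,
      H.sub_apply, H.smul_apply, e_apply] <;>
    simp [show x + 1 ≠ x - 1 by omega, show x ≠ x - 1 by omega]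

theorem IsUprtk.apply_e_zero_succ_one :
    V (e x 0) (x + 1, 1) = cexp (-(I * κ x)) * r x * √(1 - p x ^ 2) := by
  simp only [hV.apply_e_zero hr, H.add_apply, H.sub_apply, H.smul_apply, e_apply]
  simp [show x - 1 ≠ x + 1 by omega]

theorem IsUprtk.apply_e_one_succ_one :
    V (e x 1) (x + 1, 1) = √(1 - r x ^ 2) * √(1 - p x ^ 2) := by
  simp only [hV.apply_e_one hr, H.add_apply, H.sub_apply, H.smul_apply, e_apply]
  simp [show x - 1 ≠ x + 1 by omega]

theorem IsUprtk.apply_e_zero_pred_zero :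
    V (e x 0) (x - 1, 0) = √(1 - r x ^ 2) * √(1 - p (x - 1) ^ 2) := by
  simp only [hV.apply_e_zero hr, H.add_apply, H.sub_apply, H.smul_apply, e_apply]
  simp [show x + 1 ≠ x - 1 by omega, show x ≠ x - 1 by omega]

theorem IsUprtk.apply_e_one_pred_zero :
    V (e x 1) (x - 1, 0) = -(cexp (I * κ x) * r x * √(1 - p (x - 1) ^ 2)) := by
  simp only [hV.apply_e_one hr, H.add_apply, H.sub_apply, H.smul_apply, e_apply]
  simp [show x + 1 ≠ x - 1 by omega, show x ≠ x - 1 by omega]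

theorem IsUprtk.apply_e_zero_self_zero :
    V (e x 0) (x, 0) = cexp (-(I * κ x)) * r x * (cexp (I * θ x) * p x) := by
  simp only [hV.apply_e_zero hr, H.add_apply, H.sub_apply, H.smul_apply, e_apply]
  simp

theorem IsUprtk.apply_e_one_self_zero :
    V (e x 1) (x, 0) = √(1 - r x ^ 2) * (cexp (I * θ x) * p x) := by
  simp only [hV.apply_e_one hr, H.add_apply, H.sub_apply, H.smul_apply, e_apply]
  simp

end Walk

theorem eq_zero_of_mul_eq_zero_of_mul_sqrt_eq_zero {c u : ℂ} {ρ : ℝ} (hu : u ≠ 0)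
    (h₁ : c * (u * ρ) = 0) (h₂ : c * √(1 - ρ ^ 2) = 0) : c = 0 := by
  by_contra hc
  have hρ : ρ = 0 := by simpa [hc, hu] using h₁
  simp [hc, hρ] at h₂

theorem sqrt_one_sub_sq_ne_zero {ρ : ℝ} (hρ : ρ ∈ Ico (0 : ℝ) 1) :
    (√(1 - ρ ^ 2) : ℂ) ≠ 0 := by
  rw [ofReal_ne_zero, Real.sqrt_ne_zero']
  nlinarith [hρ.1, hρ.2]

section Intertwining

variable {p r θ κ p' r' θ' κ' : ℤ → ℝ} {V V' W : H ≃ₗᵢ[ℂ] H}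
  (hW : ∀ x, (Hx x).map (W.toLinearEquiv : H →ₗ[ℂ] H) = Hx x)
  (hcomm : ∀ ψ, V' (W ψ) = W (V ψ))
include hW hcomm

theorem sum_map_e_mul_eq_sum (x : ℤ) (i : Fin 2) (y : ℤ) (j : Fin 2) :
    ∑ k, W (e x i) (x, k) * V' (e x k) (y, j) = ∑ k, W (e y k) (y, j) * V (e x i) (y, k) := by
  have h := congrArg (· (y, j)) (hcomm (e x i))
  simp only at h
  rw [map_apply_eq_sum hW, eq_of_mem_Hx (map_e_mem_Hx hW x i)] at h
  simpa [Fin.sum_univ_two] using h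

variable (hp : ∀ x, p x ∈ Ico (0 : ℝ) 1) (hr : ∀ x, r x ∈ Icc (0 : ℝ) 1)
  (hr' : ∀ x, r' x ∈ Icc (0 : ℝ) 1) (hV : IsUprtk p r θ κ V)
  (hV' : IsUprtk p' r' θ' κ' V')
include hp hr hr' hV hV'

theorem map_e_one_apply_zero (y : ℤ) : W (e y 1) (y, 0) = 0 := by
  obtain ⟨x, rfl⟩ : ∃ x, y = x + 1 := ⟨y - 1, by ring⟩
  have h : ∀ i, W (e (x + 1) 1) (x + 1, 0) * V (e x i) (x + 1, 1) = 0 := fun i => by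
    simpa [Fin.sum_univ_two, hV.apply_e_succ_zero (hr x), hV'.apply_e_succ_zero (hr' x)]
      using (sum_map_e_mul_eq_sum hW hcomm x i (x + 1) 0).symm
  have h₀ := h 0
  have h₁ := h 1
  rw [hV.apply_e_zero_succ_one (hr x)] at h₀
  rw [hV.apply_e_one_succ_one (hr x)] at h₁
  refine (mul_eq_zero.1 (eq_zero_of_mul_eq_zero_of_mul_sqrt_eq_zero (exp_ne_zero _)
    (u := cexp (-(I * κ x))) (ρ := r x) ?_ ?_)).resolve_right (sqrt_one_sub_sq_ne_zero (hp x))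
  · linear_combination h₀
  · linear_combination h₁

theorem map_e_zero_apply_one (y : ℤ) : W (e y 0) (y, 1) = 0 := by
  obtain ⟨x, rfl⟩ : ∃ x, y = x - 1 := ⟨y + 1, by ring⟩
  have h : ∀ i, W (e (x - 1) 0) (x - 1, 1) * V (e x i) (x - 1, 0) = 0 := fun i => by
    simpa [Fin.sum_univ_two, hV.apply_e_pred_one (hr x), hV'.apply_e_pred_one (hr' x)]
      using (sum_map_e_mul_eq_sum hW hcomm x i (x - 1) 1).symm
  have h₀ := h 0
  have h₁ := h 1
  rw [hV.apply_e_zero_pred_zero (hr x)] at h₀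
  rw [hV.apply_e_one_pred_zero (hr x)] at h₁
  refine (mul_eq_zero.1 (eq_zero_of_mul_eq_zero_of_mul_sqrt_eq_zero (exp_ne_zero _)
    (u := cexp (I * κ x)) (ρ := r x) ?_ ?_)).resolve_right (sqrt_one_sub_sq_ne_zero (hp (x - 1)))
  · linear_combination -h₁
  · linear_combination h₀

theorem map_e_eq_smul (x : ℤ) (i : Fin 2) : W (e x i) = W (e x i) (x, i) • e x i := by
  rw [eq_of_mem_Hx (map_e_mem_Hx hW x i)]
  fin_cases i
  · simp [map_e_zero_apply_one hW hcomm hp hr hr' hV hV', e_apply]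
  · simp [map_e_one_apply_zero hW hcomm hp hr hr' hV hV', e_apply]

theorem diag_mul_apply_e_eq (x : ℤ) (i : Fin 2) (y : ℤ) (j : Fin 2) :
    W (e x i) (x, i) * V' (e x i) (y, j) = W (e y j) (y, j) * V (e x i) (y, j) := by
  have h := sum_map_e_mul_eq_sum hW hcomm x i y j
  rw [Fintype.sum_eq_single i, Fintype.sum_eq_single j] at h
  · exact h
  all_goals
    intro k hk
    rw [map_e_eq_smul hW hcomm hp hr hr' hV hV']
    simp [e_apply, hk, Ne.symm hk]

theorem norm_map_e_apply (x : ℤ) (i : Fin 2) : ‖W (e x i) (x, i)‖ = 1 := by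
  have h := W.norm_map (e x i)
  rwa [map_e_eq_smul hW hcomm hp hr hr' hV hV', norm_smul, norm_e, mul_one] at h

end Intertwining

theorem eq_and_eq_of_mul_sqrt_eq {p p' r r' : ℝ} (hp : p ∈ Ico (0 : ℝ) 1)
    (hp' : p' ∈ Icc (0 : ℝ) 1) (hr : r ∈ Icc (0 : ℝ) 1) (hr' : r' ∈ Icc (0 : ℝ) 1)
    (h₁ : r * √(1 - p ^ 2) = r' * √(1 - p' ^ 2))
    (h₂ : √(1 - r ^ 2) * √(1 - p ^ 2) = √(1 - r' ^ 2) * √(1 - p' ^ 2)) :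
    p = p' ∧ r = r' := by
  have hsq : ∀ {ρ : ℝ}, ρ ∈ Icc (0 : ℝ) 1 → √(1 - ρ ^ 2) ^ 2 = 1 - ρ ^ 2 :=
    fun hρ => Real.sq_sqrt (by nlinarith [hρ.1, hρ.2])
  have e₁ := congrArg (· ^ 2) h₁
  have e₂ := congrArg (· ^ 2) h₂
  simp only [mul_pow, hsq (Ico_subset_Icc_self hp), hsq hp', hsq hr, hsq hr'] at e₁ e₂
  have hpp : p = p' :=
    (pow_left_inj₀ hp.1 hp'.1 two_ne_zero).1 (by linear_combination -e₁ - e₂)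
  subst hpp
  refine ⟨rfl, mul_right_cancel₀ ?_ h₁⟩
  exact Real.sqrt_ne_zero'.2 (by nlinarith [hp.1, hp.2])

theorem norm_apply_e_succ_one_eq {p r θ κ : ℤ → ℝ} {V : H ≃ₗᵢ[ℂ] H}
    (hV : IsUprtk p r θ κ V) (hr : ∀ x, r x ∈ Icc (0 : ℝ) 1) (x : ℤ) :
    ‖V (e x 0) (x + 1, 1)‖ = r x * √(1 - p x ^ 2) ∧
      ‖V (e x 1) (x + 1, 1)‖ = √(1 - r x ^ 2) * √(1 - p x ^ 2) := by
  rw [hV.apply_e_zero_succ_one (hr x), hV.apply_e_one_succ_one (hr x)]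
  simp [Complex.norm_exp, abs_of_nonneg (hr x).1, abs_of_nonneg (Real.sqrt_nonneg _)]

theorem params_eq_of_diag_conj {p r θ κ p' r' θ' κ' : ℤ → ℝ} {V V' : H ≃ₗᵢ[ℂ] H}
    {d : ℤ → Fin 2 → ℂ} (hp : ∀ x, p x ∈ Ico (0 : ℝ) 1)
    (hp' : ∀ x, p' x ∈ Icc (0 : ℝ) 1) (hr : ∀ x, r x ∈ Icc (0 : ℝ) 1)
    (hr' : ∀ x, r' x ∈ Icc (0 : ℝ) 1)
    (hV : IsUprtk p r θ κ V) (hV' : IsUprtk p' r' θ' κ' V') (hd : ∀ x i, ‖d x i‖ = 1)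
    (hrel : ∀ x i y j, d x i * V' (e x i) (y, j) = d y j * V (e x i) (y, j)) :
    p = p' ∧ r = r' := by
  have hnorm : ∀ x i y j, ‖V (e x i) (y, j)‖ = ‖V' (e x i) (y, j)‖ := fun x i y j => by
    simpa [hd] using congrArg norm (hrel x i y j).symm
  have h x := eq_and_eq_of_mul_sqrt_eq (hp x) (hp' x) (hr x) (hr' x)
    (by rw [← (norm_apply_e_succ_one_eq hV hr x).1,
      ← (norm_apply_e_succ_one_eq hV' hr' x).1, hnorm])
    (by rw [← (norm_apply_e_succ_one_eq hV hr x).2,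
      ← (norm_apply_e_succ_one_eq hV' hr' x).2, hnorm])
  exact ⟨funext fun x => (h x).1, funext fun x => (h x).2⟩

section Phases

variable {p r θ κ θ' κ' : ℤ → ℝ} {V V' : H ≃ₗᵢ[ℂ] H} {d : ℤ → Fin 2 → ℂ}
  (hr : ∀ x, r x ∈ Icc (0 : ℝ) 1) (hV : IsUprtk p r θ κ V) (hV' : IsUprtk p r θ' κ' V')
  (hrel : ∀ x i y j, d x i * V' (e x i) (y, j) = d y j * V (e x i) (y, j))
include hr hV hV' hrel

theorem diag_zero_mul_exp_kappa (hp : ∀ x, p x ∈ Ico (0 : ℝ) 1) {x : ℤ} (hrx : r x ≠ 0) :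
    d x 0 * cexp (I * κ x) = d (x + 1) 1 * cexp (I * κ' x) := by
  have h := hrel x 0 (x + 1) 1
  rw [hV'.apply_e_zero_succ_one (hr x), hV.apply_e_zero_succ_one (hr x)] at h
  refine mul_right_cancel₀
    (mul_ne_zero (ofReal_ne_zero.2 hrx) (sqrt_one_sub_sq_ne_zero (hp x))) ?_
  linear_combination cexp (I * κ x) * cexp (I * κ' x) * h
    - d x 0 * cexp (I * κ x) * r x * √(1 - p x ^ 2) * exp_neg_I_mul_mul_exp_I_mul (κ' x)
    + d (x + 1) 1 * cexp (I * κ' x) * r x * √(1 - p x ^ 2) * exp_neg_I_mul_mul_exp_I_mul (κ x)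

theorem diag_one_mul_exp_kappa' (hp : ∀ x, p x ∈ Ico (0 : ℝ) 1) {x : ℤ} (hrx : r x ≠ 0) :
    d x 1 * cexp (I * κ' x) = d (x - 1) 0 * cexp (I * κ x) := by
  have h := hrel x 1 (x - 1) 0
  rw [hV'.apply_e_one_pred_zero (hr x), hV.apply_e_one_pred_zero (hr x)] at h
  refine mul_right_cancel₀
    (mul_ne_zero (ofReal_ne_zero.2 hrx) (sqrt_one_sub_sq_ne_zero (hp (x - 1)))) ?_
  linear_combination -h

theorem diag_succ_eq_of_eq_zero (hp : ∀ x, p x ∈ Ico (0 : ℝ) 1) {x : ℤ} (hrx : r x = 0) :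
    d (x + 1) 1 = d x 1 := by
  have h := hrel x 1 (x + 1) 1
  simp only [hV'.apply_e_one_succ_one (hr x), hV.apply_e_one_succ_one (hr x), hrx] at h
  refine mul_right_cancel₀ (sqrt_one_sub_sq_ne_zero (hp x)) ?_
  simpa using h.symm

theorem diag_pred_eq_of_eq_zero (hp : ∀ x, p x ∈ Ico (0 : ℝ) 1) {x : ℤ} (hrx : r x = 0) :
    d (x - 1) 0 = d x 0 := by
  have h := hrel x 0 (x - 1) 0
  simp only [hV'.apply_e_zero_pred_zero (hr x), hV.apply_e_zero_pred_zero (hr x), hrx] at h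
  refine mul_right_cancel₀ (sqrt_one_sub_sq_ne_zero (hp (x - 1))) ?_
  simpa using h.symm

theorem exp_theta_mul_exp_kappa {x : ℤ} (hd : d x 0 ≠ 0) (hrx : r x ≠ 0) (hpx : p x ≠ 0) :
    cexp (I * θ' x) * cexp (I * κ x) = cexp (I * θ x) * cexp (I * κ' x) := by
  have h := hrel x 0 x 0
  rw [hV'.apply_e_zero_self_zero (hr x), hV.apply_e_zero_self_zero (hr x)] at h
  refine mul_right_cancel₀
    (mul_ne_zero (mul_ne_zero hd (ofReal_ne_zero.2 hrx)) (ofReal_ne_zero.2 hpx)) ?_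
  linear_combination cexp (I * κ x) * cexp (I * κ' x) * h
    - d x 0 * r x * p x * cexp (I * θ' x) * cexp (I * κ x) * exp_neg_I_mul_mul_exp_I_mul (κ' x)
    + d x 0 * r x * p x * cexp (I * θ x) * cexp (I * κ' x) * exp_neg_I_mul_mul_exp_I_mul (κ x)

theorem diag_mul_exp_theta_of_eq_zero {x : ℤ} (hrx : r x = 0) (hpx : p x ≠ 0) :
    d x 1 * cexp (I * θ' x) = d x 0 * cexp (I * θ x) := by
  have h := hrel x 1 x 0
  simp only [hV'.apply_e_one_self_zero (hr x), hV.apply_e_one_self_zero (hr x), hrx] at h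
  refine mul_right_cancel₀ (ofReal_ne_zero.2 hpx) ?_
  simpa [mul_assoc] using h

theorem diag_succ_mul_diag_pred (hp : ∀ x, p x ∈ Ico (0 : ℝ) 1) (x : ℤ) :
    d (x + 1) 1 * d (x - 1) 0 = d x 1 * d x 0 := by
  by_cases hrx : r x = 0
  · rw [diag_succ_eq_of_eq_zero hr hV hV' hrel hp hrx,
      diag_pred_eq_of_eq_zero hr hV hV' hrel hp hrx]
  · refine mul_right_cancel₀ (mul_ne_zero (exp_ne_zero (I * κ x)) (exp_ne_zero (I * κ' x))) ?_
    linear_combination -(d x 1 * cexp (I * κ' x)) * diag_zero_mul_exp_kappa hr hV hV' hrel hp hrx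
      - d (x + 1) 1 * cexp (I * κ' x) * diag_one_mul_exp_kappa' hr hV hV' hrel hp hrx

theorem diag_ratio_eq (hp : ∀ x, p x ∈ Ico (0 : ℝ) 1) (hd : ∀ x i, d x i ≠ 0) (x : ℤ) :
    d (x + 1) 1 / d x 0 = d 1 1 / d 0 0 := by
  have step : ∀ x : ℤ, d (x + 1) 1 / d x 0 = d (x - 1 + 1) 1 / d (x - 1) 0 := fun x => by
    rw [sub_add_cancel, div_eq_div_iff (hd x 0) (hd (x - 1) 0)]
    exact diag_succ_mul_diag_pred hr hV hV' hrel hp x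
  induction x using Int.induction_on with
  | zero => simp
  | succ n ih => rw [step, add_sub_cancel_right, ih]
  | pred n ih => rw [← ih, step (-n), sub_add_cancel]

theorem exp_kappa_eq (hp : ∀ x, p x ∈ Ico (0 : ℝ) 1) (hd : ∀ x i, d x i ≠ 0) {x : ℤ}
    (hrx : r x ≠ 0) : cexp (I * κ x) = d 1 1 / d 0 0 * cexp (I * κ' x) := by
  rw [← diag_ratio_eq hr hV hV' hrel hp hd x, div_mul_eq_mul_div, eq_div_iff (hd x 0)]
  linear_combination diag_zero_mul_exp_kappa hr hV hV' hrel hp hrx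

theorem exp_theta_eq (hp : ∀ x, p x ∈ Ico (0 : ℝ) 1) (hd : ∀ x i, d x i ≠ 0) {x : ℤ}
    (hpx : p x ≠ 0) : cexp (I * θ x) = d 1 1 / d 0 0 * cexp (I * θ' x) := by
  by_cases hrx : r x = 0
  · rw [← diag_ratio_eq hr hV hV' hrel hp hd (x - 1), sub_add_cancel,
      diag_pred_eq_of_eq_zero hr hV hV' hrel hp hrx, div_mul_eq_mul_div, eq_div_iff (hd x 0)]
    linear_combination -diag_mul_exp_theta_of_eq_zero hr hV hV' hrel hrx hpx
  · refine mul_right_cancel₀ (exp_ne_zero (I * κ' x)) ?_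
    linear_combination -exp_theta_mul_exp_kappa hr hV hV' hrel (hd x 0) hrx hpx
      + cexp (I * θ' x) * exp_kappa_eq hr hV hV' hrel hp hd hrx

end Phases

theorem exp_I_mul_injOn : InjOn (fun t : ℝ => cexp (I * t)) (Ico 0 (2 * Real.pi)) :=
  fun a ha b hb h => Circle.exp_injOn_Ico (by simp) ha hb
    (Subtype.ext (by simpa only [Circle.coe_exp, mul_comm _ I] using h))

/-- The site where `NormalizedCaseOne` fixes the gauge for the sequence `f`. -/
def IsGaugePoint (f : ℤ → ℝ) (w : ℤ) : Prop :=
  IsLeast {x | 0 ≤ x ∧ f x ≠ 0} w ∨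
    ((∀ x, 0 ≤ x → f x = 0) ∧ IsGreatest {x | x ≤ -1 ∧ f x ≠ 0} w)

theorem exists_isGaugePoint {f : ℤ → ℝ} (hf : ∃ x, f x ≠ 0) :
    ∃ w, f w ≠ 0 ∧ IsGaugePoint f w := by
  by_cases h₀ : ∃ x, 0 ≤ x ∧ f x ≠ 0
  · obtain ⟨w, hw, hmin⟩ := Int.exists_least_of_bdd ⟨0, fun z hz => hz.1⟩ h₀
    exact ⟨w, hw.2, Or.inl ⟨hw, hmin⟩⟩
  · push Not at h₀
    obtain ⟨x₀, hx₀⟩ := hf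
    have hx₀neg : x₀ ≤ -1 := by
      by_contra! h
      exact hx₀ (h₀ x₀ (by omega))
    obtain ⟨w, hw, hmax⟩ := Int.exists_greatest_of_bdd (P := fun z => z ≤ -1 ∧ f z ≠ 0)
      ⟨-1, fun z hz => hz.1⟩ ⟨x₀, hx₀neg, hx₀⟩
    exact ⟨w, hw.2, Or.inr ⟨h₀, hw, hmax⟩⟩

namespace NormalizedCaseOne

variable {p r θ κ : ℤ → ℝ} (hN : NormalizedCaseOne p r θ κ)
include hN

theorem kappa_eq_zero {w : ℤ} (hw : IsGaugePoint r w) : κ w = 0 :=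
  hw.elim (hN.2.2.2.1 w) fun hw => hN.2.2.2.2.1 hw.1 w hw.2

theorem theta_eq_zero (hr : ∀ x, r x = 0) {w : ℤ} (hw : IsGaugePoint p w) : θ w = 0 :=
  hw.elim ((hN.2.2.2.2.2 hr).1 w) fun hw => (hN.2.2.2.2.2 hr).2 hw.1 w hw.2

end NormalizedCaseOne

theorem phases_eq_of_exp_eq_mul {p r θ κ θ' κ' : ℤ → ℝ}
    (hθ : ∀ x, θ x ∈ Ico 0 (2 * Real.pi)) (hθ' : ∀ x, θ' x ∈ Ico 0 (2 * Real.pi))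
    (hκ : ∀ x, κ x ∈ Ico 0 (2 * Real.pi)) (hκ' : ∀ x, κ' x ∈ Ico 0 (2 * Real.pi))
    (hN : NormalizedCaseOne p r θ κ) (hN' : NormalizedCaseOne p r θ' κ') {T : ℂ}
    (hκT : ∀ x, r x ≠ 0 → cexp (I * κ x) = T * cexp (I * κ' x))
    (hθT : ∀ x, p x ≠ 0 → cexp (I * θ x) = T * cexp (I * θ' x)) :
    θ = θ' ∧ κ = κ' := by
  have hT : ((∃ x, r x ≠ 0) ∨ ∃ x, p x ≠ 0) → T = 1 := by
    intro h
    by_cases hr : ∃ x, r x ≠ 0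
    · obtain ⟨w, hw, hg⟩ := exists_isGaugePoint hr
      simpa [hN.kappa_eq_zero hg, hN'.kappa_eq_zero hg] using (hκT w hw).symm
    · obtain ⟨w, hw, hg⟩ := exists_isGaugePoint (h.resolve_left hr)
      push Not at hr
      simpa [hN.theta_eq_zero hr hg, hN'.theta_eq_zero hr hg] using (hθT w hw).symm
  refine ⟨funext fun x => ?_, funext fun x => ?_⟩
  · by_cases hpx : p x = 0
    · rw [hN.2.1 x hpx, hN'.2.1 x hpx]
    · exact exp_I_mul_injOn (hθ x) (hθ' x) (by simp [hθT x hpx, hT (Or.inr ⟨x, hpx⟩)])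
  · by_cases hrx : r x = 0
    · rw [hN.2.2.1 x hrx, hN'.2.2.1 x hrx]
    · exact exp_I_mul_injOn (hκ x) (hκ' x) (by simp [hκT x hrx, hT (Or.inl ⟨x, hrx⟩)])

theorem IsUprtk.unique {p r θ κ : ℤ → ℝ} {V V' : H ≃ₗᵢ[ℂ] H}
    (hV : IsUprtk p r θ κ V) (hV' : IsUprtk p r θ κ V') (hr : ∀ x, r x ∈ Icc (0 : ℝ) 1) : V = V' := by
  have h : clm V = clm V' := ext_e fun x => Fin.forall_fin_two.2
    ⟨(hV.apply_e_zero (hr x)).trans (hV'.apply_e_zero (hr x)).symm,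
      (hV.apply_e_one (hr x)).trans (hV'.apply_e_one (hr x)).symm⟩
  exact LinearIsometryEquiv.ext fun ψ => congrArg (· ψ) h

theorem unitEquiv_refl (V : H ≃ₗᵢ[ℂ] H) : UnitEquiv V V :=
  ⟨LinearIsometryEquiv.refl ℂ H, fun x => Submodule.map_id (Hx x), by ext; rfl⟩

/-- **Theorem 3.4, Case (1).** For normalized parameter
families, `U_{p,r,θ,κ}` and `U_{p′,r′,θ′,κ′}` are unitarily equivalent iff
`p = p′`, `r = r′`, `θ = θ′` and `κ = κ′`. -/
theorem unitary_equiv_iff_case_one (p p' r r' θ θ' κ κ' : ℤ → ℝ)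
    (hp : ∀ x : ℤ, p x ∈ Set.Icc (0 : ℝ) 1) (hp' : ∀ x : ℤ, p' x ∈ Set.Icc (0 : ℝ) 1)
    (hr : ∀ x : ℤ, r x ∈ Set.Icc (0 : ℝ) 1) (hr' : ∀ x : ℤ, r' x ∈ Set.Icc (0 : ℝ) 1)
    (hθ : ∀ x : ℤ, θ x ∈ Set.Ico (0 : ℝ) (2 * Real.pi))
    (hθ' : ∀ x : ℤ, θ' x ∈ Set.Ico (0 : ℝ) (2 * Real.pi))
    (hκ : ∀ x : ℤ, κ x ∈ Set.Ico (0 : ℝ) (2 * Real.pi))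
    (hκ' : ∀ x : ℤ, κ' x ∈ Set.Ico (0 : ℝ) (2 * Real.pi))
    (hN : NormalizedCaseOne p r θ κ) (hN' : NormalizedCaseOne p' r' θ' κ')
    (V V' : H ≃ₗᵢ[ℂ] H)
    (hV : IsUprtk p r θ κ V) (hV' : IsUprtk p' r' θ' κ' V') :
    UnitEquiv V V' ↔ (p = p' ∧ r = r' ∧ θ = θ' ∧ κ = κ') := by
  constructor
  · rintro ⟨W, hW, hWV⟩
    have hcomm (ψ : H) : V' (W ψ) = W (V ψ) := by simp [hWV]
    have hq (x : ℤ) : p x ∈ Ico (0 : ℝ) 1 := ⟨(hp x).1, hN.1 x⟩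
    have hd := norm_map_e_apply hW hcomm hq hr hr' hV hV'
    have hrel := diag_mul_apply_e_eq hW hcomm hq hr hr' hV hV'
    obtain ⟨rfl, rfl⟩ := params_eq_of_diag_conj hq hp' hr hr' hV hV' hd hrel
    have hd₀ (x : ℤ) (i : Fin 2) : W (e x i) (x, i) ≠ 0 := norm_ne_zero_iff.1 (by simp [hd])
    obtain ⟨rfl, rfl⟩ := phases_eq_of_exp_eq_mul hθ hθ' hκ hκ' hN hN'
      (fun _ => exp_kappa_eq hr hV hV' hrel hq hd₀)
      (fun _ => exp_theta_eq hr hV hV' hrel hq hd₀)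
    exact ⟨rfl, rfl, rfl, rfl⟩
  · rintro ⟨rfl, rfl, rfl, rfl⟩
    rw [hV.unique hV' hr]
    exact unitEquiv_refl V'
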